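/- arXiv:1401.4500 — 6 statements merged into one kernel-verified Lean document; each statement's English description precedes it below -/
import Mathlib

section
/- Let τ¹, …, τᴺ be i.i.d. geometric random variables on {1,2,…} with parameter p ∈ (0,1), i.e. P(τʲ > t) = (1−p)ᵗ for all nonnegative integers t. Let T ≥ 1 be a fixed polling time, define M = min{m ≥ 1 : ∃ j, τʲ ≤ mT}, K = min{j : τʲ ≤ MT}, and ξ = (N−1)(M−1)T + (K−1)T + τᴷ. Then ξ has the same law as τ¹ (ξ is geometric with parameter p). -/
/-!
Write `τⱼ = bⱼT + uⱼ` with `1 ≤ uⱼ ≤ T`: replica `j` exits during polling block `bⱼ + 1`.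
The pair `(M - 1, K)` is the lexicographically least `(bⱼ, j)`, and
`ξ - 1 = (N(M - 1) + K)T + u_K - 1`. Decomposing `t - 1 = (Na + k)T + r` with `k < N`, `r < T`,
the event `ξ = t` is therefore the product event "`τⱼ > (a + 1)T` for `j < k`,
`τₖ = aT + r + 1`, `τⱼ > aT` for `j > k`", whose probability under independence is
`p(1 - p)^((Na + k)T + r) = p(1 - p)^(t - 1)`.
-/

open MeasureTheory ProbabilityTheory

lemma measure_eq_succ_of_geometric_tail {Ω : Type*} [MeasurableSpace Ω] {μ : Measure Ω}
    {f : Ω → ℕ} (hf : Measurable f) {p : ℝ} (hp : p ≤ 1)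
    (h : ∀ t : ℕ, μ {ω | t < f ω} = ENNReal.ofReal ((1 - p) ^ t)) (s : ℕ) :
    μ {ω | f ω = s + 1} = ENNReal.ofReal ((1 - p) ^ s * p) := by
  have hsub : {ω | s + 1 < f ω} ⊆ {ω | s < f ω} := fun ω hω => by
    simp only [Set.mem_ofPred_eq] at *; omega
  have hdiff : {ω | f ω = s + 1} = {ω | s < f ω} \ {ω | s + 1 < f ω} := by
    ext ω; simp only [Set.mem_ofPred_eq, Set.mem_sdiff, not_lt]; omega
  rw [hdiff, measure_sdiff hsub (hf measurableSet_Ioi).nullMeasurableSet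
    (by rw [h]; exact ENNReal.ofReal_ne_top), h, h,
    ← ENNReal.ofReal_sub _ (pow_nonneg (by linarith) _)]
  ring_nf

lemma eq_and_eq_of_mul_add_eq {q r q' r' T : ℕ} (hr : r < T) (hr' : r' < T)
    (h : q * T + r = q' * T + r') : q = q' ∧ r = r' := by
  have hT : 0 < T := by omega
  have h₁ := (Nat.div_mod_unique hT).2 ⟨(by ring : r + T * q = q * T + r), hr⟩
  have h₂ := (Nat.div_mod_unique hT).2 ⟨(by rw [h]; ring : r' + T * q' = q * T + r), hr'⟩
  omega

namespace ParRep

variable (N T : ℕ) (x : ℕ → ℕ)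

/-- `M` of the paper, for the exit times `x 0, …, x (N - 1)`. -/
noncomputable def pollIndex : ℕ := sInf {m | 1 ≤ m ∧ ∃ j < N, x j ≤ m * T}

/-- `K` of the paper, zero-based. -/
noncomputable def firstExit : ℕ := sInf {j | j < N ∧ x j ≤ pollIndex N T x * T}

/-- `ξ` of the paper. -/
noncomputable def acceleratedTime : ℕ :=
  (N - 1) * (pollIndex N T x - 1) * T + firstExit N T x * T + x (firstExit N T x)

/-- At the poll at time `(b + 1)T`, the first time any replica is found exited, the
lowest-indexed exited replica is `k`. -/
def IsFirstExit (b k : ℕ) : Prop :=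
  k < N ∧ x k ≤ (b + 1) * T ∧ (∀ j < k, (b + 1) * T < x j) ∧ ∀ j < N, b * T < x j

variable {N T x}

lemma IsFirstExit.pollIndex_eq {b k : ℕ} (h : IsFirstExit N T x b k) :
    pollIndex N T x = b + 1 := by
  obtain ⟨hk, hxk, -, hgt⟩ := h
  refine le_antisymm (Nat.sInf_le ⟨by omega, k, hk, hxk⟩)
    (le_csInf ⟨b + 1, by omega, k, hk, hxk⟩ ?_)
  rintro m ⟨hm, j, hj, hxj⟩
  by_contra! hlt
  have := hgt j hj
  have : m * T ≤ b * T := Nat.mul_le_mul_right T (by omega)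
  omega

lemma IsFirstExit.firstExit_eq {b k : ℕ} (h : IsFirstExit N T x b k) : firstExit N T x = k := by
  have hM := h.pollIndex_eq
  obtain ⟨hk, hxk, hlt, -⟩ := h
  refine le_antisymm (Nat.sInf_le ⟨hk, hM ▸ hxk⟩) (le_csInf ⟨k, hk, hM ▸ hxk⟩ ?_)
  rintro j ⟨-, hxj⟩
  by_contra! hjk
  rw [hM] at hxj
  exact absurd (hlt j hjk) (not_lt.2 hxj)

lemma isFirstExit_pollIndex_firstExit (hN : 1 ≤ N) (hT : 1 ≤ T) (hx : ∀ j < N, 0 < x j) :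
    IsFirstExit N T x (pollIndex N T x - 1) (firstExit N T x) := by
  have hne : {m | 1 ≤ m ∧ ∃ j < N, x j ≤ m * T}.Nonempty :=
    ⟨x 0, hx 0 hN, 0, hN, Nat.le_mul_of_pos_right _ hT⟩
  have hMmem : 1 ≤ pollIndex N T x ∧ ∃ j < N, x j ≤ pollIndex N T x * T := Nat.sInf_mem hne
  have hKmem : firstExit N T x < N ∧ x (firstExit N T x) ≤ pollIndex N T x * T :=
    Nat.sInf_mem hMmem.2
  have hMmin : ∀ m < pollIndex N T x, ¬(1 ≤ m ∧ ∃ j < N, x j ≤ m * T) :=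
    fun m hm => Nat.notMem_of_lt_sInf hm
  have hKmin : ∀ j < firstExit N T x, ¬(j < N ∧ x j ≤ pollIndex N T x * T) :=
    fun j hj => Nat.notMem_of_lt_sInf hj
  obtain ⟨b, hb⟩ : ∃ b, pollIndex N T x = b + 1 := ⟨_, (Nat.sub_add_cancel hMmem.1).symm⟩
  rw [hb, Nat.add_sub_cancel]
  rw [hb] at hKmem hKmin hMmin
  refine ⟨hKmem.1, hKmem.2, fun j hj => ?_, fun j hj => ?_⟩
  · by_contra! hxj
    exact hKmin j hj ⟨by omega, hxj⟩
  · by_contra! hxj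
    rcases Nat.eq_zero_or_pos b with rfl | hb0
    · have := hx j hj
      omega
    · exact hMmin b (by omega) ⟨hb0, j, hj, hxj⟩

lemma IsFirstExit.acceleratedTime_eq {b k : ℕ} (h : IsFirstExit N T x b k) :
    acceleratedTime N T x = (N * b + k) * T + (x k - b * T) := by
  have hxk := h.2.2.2 k h.1
  obtain ⟨c, rfl⟩ : ∃ c, N = c + 1 := ⟨N - 1, by have := h.1; omega⟩
  rw [acceleratedTime, h.pollIndex_eq, h.firstExit_eq, Nat.add_sub_cancel, Nat.add_sub_cancel]
  zify [hxk.le]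
  ring

lemma acceleratedTime_pos (hN : 1 ≤ N) (hT : 1 ≤ T) (hx : ∀ j < N, 0 < x j) :
    0 < acceleratedTime N T x := by
  have h := isFirstExit_pollIndex_firstExit hN hT hx
  have := h.2.2.2 _ h.1
  rw [h.acceleratedTime_eq]
  omega

def exitWindow (T a k r j : ℕ) : Set ℕ :=
  if j < k then Set.Ioi ((a + 1) * T) else if j = k then {a * T + r + 1} else Set.Ioi (a * T)

section exitWindow

variable {T a k r j : ℕ}

lemma exitWindow_of_lt (h : j < k) : exitWindow T a k r j = Set.Ioi ((a + 1) * T) := by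
  simp [exitWindow, h]

lemma exitWindow_self : exitWindow T a k r k = {a * T + r + 1} := by
  simp [exitWindow]

lemma exitWindow_of_gt (h : k < j) : exitWindow T a k r j = Set.Ioi (a * T) := by
  simp [exitWindow, h.ne', h.not_gt]

end exitWindow

lemma acceleratedTime_eq_iff (hx : ∀ j < N, 0 < x j) {a k r : ℕ} (hk : k < N) (hr : r < T) :
    acceleratedTime N T x = (N * a + k) * T + r + 1 ↔ ∀ j < N, x j ∈ exitWindow T a k r j := by
  constructor
  · intro hξ
    have h : IsFirstExit N T x (pollIndex N T x - 1) (firstExit N T x) :=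
      isFirstExit_pollIndex_firstExit (by omega) (by omega) hx
    set b := pollIndex N T x - 1
    set k' := firstExit N T x
    have hlo := h.2.2.2 k' h.1
    have hhi : x k' ≤ b * T + T := add_one_mul b T ▸ h.2.1
    rw [h.acceleratedTime_eq] at hξ
    obtain ⟨hq, hr'⟩ := eq_and_eq_of_mul_add_eq (q := N * b + k') (r := x k' - b * T - 1)
      (q' := N * a + k) (by omega) hr (by omega)
    obtain ⟨rfl, rfl⟩ := eq_and_eq_of_mul_add_eq (q := b) (q' := a) h.1 hk (by linarith [hq])
    intro j hj
    rcases lt_trichotomy j k' with hjk | rfl | hjk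
    · rw [exitWindow_of_lt hjk]
      exact h.2.2.1 j hjk
    · rw [exitWindow_self, Set.mem_singleton_iff]
      omega
    · rw [exitWindow_of_gt hjk]
      exact h.2.2.2 j hj
  · intro hw
    have hxk : x k = a * T + r + 1 := by simpa [exitWindow_self] using hw k hk
    have hlt : ∀ j < k, (a + 1) * T < x j := fun j hj => by
      simpa [exitWindow_of_lt hj] using hw j (hj.trans hk)
    have hwin : IsFirstExit N T x a k := by
      refine ⟨hk, by rw [hxk, add_one_mul]; omega, hlt, fun j hj => ?_⟩
      rcases lt_trichotomy j k with hjk | rfl | hjk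
      · exact lt_of_le_of_lt (Nat.mul_le_mul_right T (Nat.le_succ a)) (hlt j hjk)
      · omega
      · simpa [exitWindow_of_gt hjk] using hw j hj
    rw [hwin.acceleratedTime_eq, hxk]
    omega

lemma measure_forall_mem_exitWindow {Ω : Type*} [MeasurableSpace Ω] {μ : Measure Ω} {N : ℕ}
    {τ : ℕ → Ω → ℕ} (hindep : iIndepFun (fun j : Fin N => τ j) μ) {p : ℝ} (hp : p ≤ 1)
    (hgeom : ∀ j < N, ∀ t : ℕ, μ {ω | t < τ j ω} = ENNReal.ofReal ((1 - p) ^ t))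
    {T a k r : ℕ} (hk : k < N) (hmeas : Measurable (τ k)) :
    μ {ω | ∀ j < N, τ j ω ∈ exitWindow T a k r j} =
      ENNReal.ofReal ((1 - p) ^ ((N * a + k) * T + r) * p) := by
  have hset : {ω | ∀ j < N, τ j ω ∈ exitWindow T a k r j} =
      ⋂ j ∈ (Finset.univ : Finset (Fin N)), (fun j : Fin N => τ j) j ⁻¹' exitWindow T a k r j := by
    ext ω
    simp [Fin.forall_iff]
  rw [hset, hindep.measure_inter_preimage_eq_mul _ fun _ _ => MeasurableSet.of_discrete,
    Fin.prod_univ_eq_prod_range (fun j => μ (τ j ⁻¹' exitWindow T a k r j))]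
  obtain ⟨c, rfl⟩ : ∃ c, N = k + 1 + c := ⟨N - k - 1, by omega⟩
  have hbefore : ∀ j ∈ Finset.range k,
      μ (τ j ⁻¹' exitWindow T a k r j) = ENNReal.ofReal ((1 - p) ^ ((a + 1) * T)) := fun j hj => by
    rw [exitWindow_of_lt (Finset.mem_range.1 hj)]
    exact hgeom j (by simp at hj; omega) _
  have hafter : ∀ i ∈ Finset.range c, μ (τ (k + 1 + i) ⁻¹' exitWindow T a k r (k + 1 + i)) =
      ENNReal.ofReal ((1 - p) ^ (a * T)) := fun i hi => by
    rw [exitWindow_of_gt (by omega)]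
    exact hgeom _ (by simp at hi; omega) _
  have hat : μ (τ k ⁻¹' exitWindow T a k r k) = ENNReal.ofReal ((1 - p) ^ (a * T + r) * p) := by
    rw [exitWindow_self]
    exact measure_eq_succ_of_geometric_tail hmeas hp (hgeom k hk) _
  have h1p : 0 ≤ 1 - p := by linarith
  rw [Finset.prod_range_add, Finset.prod_range_succ, Finset.prod_congr rfl hbefore,
    Finset.prod_congr rfl hafter, hat, Finset.prod_const, Finset.prod_const, Finset.card_range,
    Finset.card_range, ← ENNReal.ofReal_pow (by positivity), ← ENNReal.ofReal_pow (by positivity),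
    mul_right_comm, ← ENNReal.ofReal_mul (by positivity), ← ENNReal.ofReal_mul (by positivity),
    ← pow_mul, ← pow_mul]
  ring_nf

end ParRep

open ParRep in
theorem parRep_accelerated_time_polling_general
    {Ω : Type*} [MeasurableSpace Ω] (μ : Measure Ω) [IsProbabilityMeasure μ]
    (N : ℕ) (hN : 1 ≤ N) (T : ℕ) (hT : 1 ≤ T) (p : ℝ) (hp1 : p < 1)
    (τ : ℕ → Ω → ℕ) (hmeas : ∀ j, Measurable (τ j))
    (hindep : iIndepFun (fun j : Fin N => τ j) μ)
    (hgeom : ∀ j < N, ∀ t : ℕ, μ {ω | t < τ j ω} = ENNReal.ofReal ((1 - p) ^ t))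
    (M : Ω → ℕ) (hM : ∀ ω, M ω = sInf {m | 1 ≤ m ∧ ∃ j < N, τ j ω ≤ m * T})
    (K : Ω → ℕ) (hK : ∀ ω, K ω = sInf {j | j < N ∧ τ j ω ≤ M ω * T})
    (ξ : Ω → ℕ)
    (hξ : ∀ ω, ξ ω = (N - 1) * (M ω - 1) * T + K ω * T + τ (K ω) ω) :
    ∀ t : ℕ, μ {ω | ξ ω = t} = μ {ω | τ 0 ω = t} := by
  have hξ' : ∀ ω, ξ ω = acceleratedTime N T (τ · ω) := fun ω => by rw [hξ, hK, hM]; rfl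
  have hpos : ∀ᵐ ω ∂μ, ∀ j < N, 0 < τ j ω := by
    refine ae_all_iff.2 fun j => ?_
    by_cases hj : j < N
    · have : ∀ᵐ ω ∂μ, 0 < τ j ω :=
        (ae_iff_measure_eq (hmeas j measurableSet_Ioi).nullMeasurableSet).2
          (by simpa using hgeom j hj 0)
      filter_upwards [this] with ω h _ using h
    · exact Filter.Eventually.of_forall fun ω h => absurd h hj
  rintro (_ | n)
  · rw [measure_eq_zero_iff_ae_notMem.2, measure_eq_zero_iff_ae_notMem.2] <;>
      filter_upwards [hpos] with ω hω
    · exact (hω 0 hN).ne'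
    · exact fun h => (acceleratedTime_pos hN hT hω).ne' ((hξ' ω).symm.trans h)
  obtain ⟨a, k, r, hk, hr, rfl⟩ : ∃ a k r, k < N ∧ r < T ∧ n = (N * a + k) * T + r :=
    ⟨n / T / N, n / T % N, n % T, Nat.mod_lt _ hN, Nat.mod_lt _ hT,
      by rw [Nat.div_add_mod (n / T) N, Nat.div_add_mod' n T]⟩
  calc μ {ω | ξ ω = (N * a + k) * T + r + 1}
      = μ {ω | ∀ j < N, τ j ω ∈ exitWindow T a k r j} := by
        refine measure_congr (Filter.eventuallyEq_set.2 ?_)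
        filter_upwards [hpos] with ω hω
        rw [hξ']
        exact acceleratedTime_eq_iff hω hk hr
    _ = μ {ω | τ 0 ω = (N * a + k) * T + r + 1} := by
      rw [measure_forall_mem_exitWindow hindep hp1.le hgeom hk (hmeas k),
        measure_eq_succ_of_geometric_tail (hmeas 0) hp1.le (hgeom 0 hN)]

/-- the ParRep accelerated time with polling time `T` has the same
law as a single geometric exit time. Indices of replicas are `0, …, N-1`
(zero-based), so the one-based `K` of the paper is `K+1` here and the term
`(K-1)T` becomes `K*T`. -/
theorem parRep_accelerated_time_polling
    {Ω : Type*} [MeasurableSpace Ω] (μ : Measure Ω) [IsProbabilityMeasure μ]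
    (N : ℕ) (hN : 1 ≤ N) (T : ℕ) (hT : 1 ≤ T) (p : ℝ) (hp0 : 0 < p) (hp1 : p < 1)
    (τ : ℕ → Ω → ℕ) (hmeas : ∀ j, Measurable (τ j))
    (hindep : iIndepFun (fun j : Fin N => τ j) μ)
    (hgeom : ∀ j < N, ∀ t : ℕ, μ {ω | t < τ j ω} = ENNReal.ofReal ((1 - p) ^ t))
    (M : Ω → ℕ) (hM : ∀ ω, M ω = sInf {m | 1 ≤ m ∧ ∃ j < N, τ j ω ≤ m * T})
    (K : Ω → ℕ) (hK : ∀ ω, K ω = sInf {j | j < N ∧ τ j ω ≤ M ω * T})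
    (ξ : Ω → ℕ)
    (hξ : ∀ ω, ξ ω = (N - 1) * (M ω - 1) * T + K ω * T + τ (K ω) ω) :
    ∀ t : ℕ, μ {ω | ξ ω = t} = μ {ω | τ 0 ω = t} :=
  parRep_accelerated_time_polling_general μ N hN T hT p hp1 τ hmeas hindep hgeom M hM K hK ξ hξ
end

section
/- Let τ¹, …, τᴺ be i.i.d. geometric random variables with parameter p ∈ (0,1) (supported on {1,2,…}). Define K = min{j ∈ {1,…,N} : τʲ = min(τ¹,…,τᴺ)} and ξ = N(min(τ¹,…,τᴺ) − 1) + K. Then ξ is geometric with parameter p, i.e. ξ has the same law as τ¹. -/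
/-!
Write `t = N q + r` with `0 ≤ r < N`. Off the null event where some `τʲ` vanishes, `ξ > t`
holds exactly when the first `r` replicas survive past `q + 1` and the remaining ones past `q`
(lexicographic comparison of `(min τ - 1, K)` with `(q, r)`). By independence this event has
probability `(1 - p) ^ (N q + r) = (1 - p) ^ t`, which is the tail of `τ¹`; on `ℕ` the tails
determine the point masses.
-/

open MeasureTheory ProbabilityTheory

theorem Nat.mul_add_le_mul_add_iff {N q q' r r' : ℕ} (hr : r < N) (hr' : r' < N) :
    N * q + r ≤ N * q' + r' ↔ q < q' ∨ q = q' ∧ r ≤ r' := by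
  have step {a b : ℕ} (hab : a < b) : N * a + N ≤ N * b := by
    rw [← Nat.mul_succ]
    exact Nat.mul_le_mul_left N hab
  rcases lt_trichotomy q q' with h | rfl | h
  · have := step h
    omega
  · omega
  · have := step h
    omega

theorem Fin.sum_add_ite_val_lt {N : ℕ} (q r : ℕ) (hr : r ≤ N) :
    ∑ j : Fin N, (q + if (j : ℕ) < r then 1 else 0) = N * q + r := by
  rw [Finset.sum_add_distrib, Finset.sum_const, Finset.card_univ, Fintype.card_fin,
    smul_eq_mul, Finset.sum_boole, Fin.card_filter_val_lt, min_eq_right hr, Nat.cast_id]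

theorem mul_add_lt_mul_pred_add_succ_iff {N m K : ℕ} {x : ℕ → ℕ} (hm : 0 < m) (hK : K < N)
    (hxK : x K = m) (hmin : ∀ j < N, m ≤ x j) (hfirst : ∀ j < K, m < x j) {q r : ℕ}
    (hr : r < N) :
    N * q + r < N * (m - 1) + (K + 1) ↔ ∀ j < N, q + (if j < r then 1 else 0) < x j := by
  rw [← add_assoc, Nat.lt_succ_iff, Nat.mul_add_le_mul_add_iff hr hK]
  constructor
  · rintro (hq | ⟨rfl, hrK⟩) j hj
    · have := hmin j hj
      split_ifs <;> omega
    · split_ifs with hjr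
      · have := hfirst j (by omega)
        omega
      · have := hmin j hj
        omega
  · intro h
    have hxK' := h K hK
    rw [hxK] at hxK'
    split_ifs at hxK' <;> omega

theorem lt_mul_pred_sInf_add_succ_sInf_iff {N : ℕ} (hN : 0 < N) {x : ℕ → ℕ}
    (hx : ∀ j < N, 0 < x j) (t : ℕ) :
    t < N * (sInf {s | ∃ j < N, x j = s} - 1) +
        (sInf {j | j < N ∧ x j = sInf {s | ∃ j < N, x j = s}} + 1) ↔
      ∀ j < N, t / N + (if j < t % N then 1 else 0) < x j := by
  set m := sInf {s | ∃ j < N, x j = s}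
  set K := sInf {j | j < N ∧ x j = m}
  have hK : K < N ∧ x K = m :=
    Nat.sInf_mem (Nat.sInf_mem (s := {s | ∃ j < N, x j = s}) ⟨_, 0, hN, rfl⟩)
  have hmin : ∀ j < N, m ≤ x j := fun j hj => Nat.sInf_le ⟨j, hj, rfl⟩
  have hfirst : ∀ j < K, m < x j := fun j hjK =>
    (hmin j (hjK.trans hK.1)).lt_of_ne fun h =>
      Nat.notMem_of_lt_sInf hjK ⟨hjK.trans hK.1, h.symm⟩
  conv_lhs => rw [← Nat.div_add_mod t N]
  exact mul_add_lt_mul_pred_add_succ_iff (hK.2 ▸ hx K hK.1) hK.1 hK.2 hmin hfirst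
    (Nat.mod_lt t hN)

theorem measure_eq_eq_of_measure_lt_eq {Ω : Type*} [MeasurableSpace Ω] {μ : Measure Ω}
    [IsFiniteMeasure μ] {X Y : Ω → ℕ} (hX : ∀ t, NullMeasurableSet {ω | t < X ω} μ)
    (hY : ∀ t, NullMeasurableSet {ω | t < Y ω} μ)
    (h : ∀ t, μ {ω | t < X ω} = μ {ω | t < Y ω}) (t : ℕ) :
    μ {ω | X ω = t} = μ {ω | Y ω = t} := by
  have point_zero {Z : Ω → ℕ} (hZ : ∀ t, NullMeasurableSet {ω | t < Z ω} μ) :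
      μ {ω | Z ω = 0} = μ Set.univ - μ {ω | 0 < Z ω} := by
    rw [← measure_compl₀ (hZ 0) (measure_ne_top μ _)]
    congr 1
    ext ω
    simp
  have point_succ {Z : Ω → ℕ} (hZ : ∀ t, NullMeasurableSet {ω | t < Z ω} μ) (s : ℕ) :
      μ {ω | Z ω = s + 1} = μ {ω | s < Z ω} - μ {ω | s + 1 < Z ω} := by
    rw [← measure_sdiff (show {ω | s + 1 < Z ω} ⊆ {ω | s < Z ω} from
      fun ω hω => (Nat.lt_succ_self s).trans hω) (hZ _) (measure_ne_top μ _)]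
    congr 1
    ext ω
    simp only [Set.mem_ofPred_eq, Set.mem_sdiff]
    omega
  cases t with
  | zero => rw [point_zero hX, point_zero hY, h]
  | succ s => rw [point_succ hX, point_succ hY, h, h]

theorem measure_iInter_lt_eq_ofReal_pow_sum {Ω : Type*} [MeasurableSpace Ω] {μ : Measure Ω}
    {N : ℕ} {p : ℝ} (hp : p ≤ 1) {τ : Fin N → Ω → ℕ} (hindep : iIndepFun τ μ)
    (hgeom : ∀ j t, μ {ω | t < τ j ω} = ENNReal.ofReal ((1 - p) ^ t)) (s : Fin N → ℕ) :
    μ (⋂ j, {ω | s j < τ j ω}) = ENNReal.ofReal ((1 - p) ^ ∑ j, s j) := by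
  have h := hindep.measure_inter_preimage_eq_mul Finset.univ (sets := fun j => Set.Ioi (s j))
    (fun _ _ => measurableSet_Ioi)
  simp only [Finset.mem_univ, Set.iInter_true] at h
  rw [← Finset.prod_pow_eq_pow_sum, ENNReal.ofReal_prod_of_nonneg
    (fun _ _ => pow_nonneg (sub_nonneg.2 hp) _)]
  exact h.trans (Finset.prod_congr rfl fun j _ => hgeom j (s j))

/-- Replicas are indexed `0, …, N-1`, so the one-based index `K` of the paper is `K+1` here. -/
theorem parRep_accelerated_time_general
    {Ω : Type*} [MeasurableSpace Ω] (μ : Measure Ω) [IsProbabilityMeasure μ]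
    (N : ℕ) (hN : 1 ≤ N) (p : ℝ) (hp1 : p < 1)
    (τ : ℕ → Ω → ℕ) (hmeas : ∀ j, Measurable (τ j))
    (hindep : iIndepFun (fun j : Fin N => τ j) μ)
    (hgeom : ∀ j < N, ∀ t : ℕ, μ {ω | t < τ j ω} = ENNReal.ofReal ((1 - p) ^ t))
    (m : Ω → ℕ) (hm : ∀ ω, m ω = sInf {t | ∃ j < N, τ j ω = t})
    (K : Ω → ℕ) (hK : ∀ ω, K ω = sInf {j | j < N ∧ τ j ω = m ω})
    (ξ : Ω → ℕ) (hξ : ∀ ω, ξ ω = N * (m ω - 1) + (K ω + 1)) :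
    ∀ t : ℕ, μ {ω | ξ ω = t} = μ {ω | τ 0 ω = t} := by
  have hpos : ∀ᵐ ω ∂μ, ∀ j < N, 0 < τ j ω := by
    refine ae_all_iff.2 fun j => ?_
    by_cases hj : j < N
    · have h := (prob_compl_eq_zero_iff (hmeas j measurableSet_Ioi)).2
        ((hgeom j hj 0).trans (by simp))
      filter_upwards [mem_ae_iff.2 h] with ω hω _ using hω
    · exact ae_of_all _ fun _ h => absurd h hj
  have hξ_tail (t : ℕ) : {ω | t < ξ ω} =ᵐ[μ]
      ⋂ j : Fin N, {ω | t / N + (if (j : ℕ) < t % N then 1 else 0) < τ j ω} := by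
    refine Filter.eventuallyEq_set.2 ?_
    filter_upwards [hpos] with ω hω
    simp only [Set.mem_ofPred_eq, Set.mem_iInter, hξ ω, hK ω, hm ω, Fin.forall_iff]
    exact lt_mul_pred_sInf_add_succ_sInf_iff hN hω t
  have htail (t : ℕ) : μ {ω | t < ξ ω} = μ {ω | t < τ 0 ω} := by
    rw [measure_congr (hξ_tail t), measure_iInter_lt_eq_ofReal_pow_sum hp1.le hindep
      (fun j => hgeom j j.2), Fin.sum_add_ite_val_lt _ _ (Nat.mod_lt t hN).le,
      Nat.div_add_mod, hgeom 0 hN]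
  have hξ_meas (t : ℕ) : NullMeasurableSet {ω | t < ξ ω} μ :=
    (MeasurableSet.iInter fun j : Fin N =>
      measurableSet_lt measurable_const (hmeas j)).nullMeasurableSet.congr (hξ_tail t).symm
  exact measure_eq_eq_of_measure_lt_eq hξ_meas
    (fun t => (hmeas 0 measurableSet_Ioi).nullMeasurableSet) htail

/-- with polling time 1, ξ = N(min τ − 1) + K is geometric with
parameter `p`, i.e. it has the same law as `τ¹`. Replicas are indexed
`0, …, N-1`, so the one-based index `K` of the paper is `K+1` here. -/
theorem parRep_accelerated_time
    {Ω : Type*} [MeasurableSpace Ω] (μ : Measure Ω) [IsProbabilityMeasure μ]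
    (N : ℕ) (hN : 1 ≤ N) (p : ℝ) (hp0 : 0 < p) (hp1 : p < 1)
    (τ : ℕ → Ω → ℕ) (hmeas : ∀ j, Measurable (τ j))
    (hindep : iIndepFun (fun j : Fin N => τ j) μ)
    (hgeom : ∀ j < N, ∀ t : ℕ, μ {ω | t < τ j ω} = ENNReal.ofReal ((1 - p) ^ t))
    (m : Ω → ℕ) (hm : ∀ ω, m ω = sInf {t | ∃ j < N, τ j ω = t})
    (K : Ω → ℕ) (hK : ∀ ω, K ω = sInf {j | j < N ∧ τ j ω = m ω})
    (ξ : Ω → ℕ) (hξ : ∀ ω, ξ ω = N * (m ω - 1) + (K ω + 1)) :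
    ∀ t : ℕ, μ {ω | ξ ω = t} = μ {ω | τ 0 ω = t} :=
  parRep_accelerated_time_general μ N hN p hp1 τ hmeas hindep hgeom m hm K hK ξ hξ
end

section
/- Let (X_n) be a time-homogeneous Markov chain on Ω, S measurable, τ = min{n ≥ 0 : X_n ∉ S}, and ν a quasistationary distribution on S. If X_0 ∼ ν, then the exit time τ and the exit position X_τ are independent: for every bounded measurable f and every n ≥ 1, E^ν[f(X_τ) | τ = n] = E^ν[f(X_τ) | τ = 1]. -/
open MeasureTheory ProbabilityTheory ENNReal

/-!
The quasistationarity of `ν` says that, on `S`, `ν` is the normalization of the law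
`(survivalStep κ S)^[n - 1] ν` of the surviving chain at time `n - 1`. With `ν S = 1`
the normalizing mass is neither `0` nor `∞`, so both measures agree on `S` up to a
constant factor, which cancels in the ratio defining `E^ν[f(X_τ) | τ = n]`.
-/

/-- One step of the dynamics killed outside `S`:
`(survivalStep κ S)^[n] ν A = P^ν(X_n ∈ A, τ > n)` for `A ⊆ S`. -/
noncomputable def survivalStep {E : Type*} [MeasurableSpace E]
    (κ : ProbabilityTheory.Kernel E E) (S : Set E) (μ : Measure E) : Measure E :=
  (μ.restrict S).bind (fun x => κ x)

theorem ENNReal.ne_zero_and_ne_top_of_div_self_eq_one {c : ℝ≥0∞} (h : c / c = 1) :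
    c ≠ 0 ∧ c ≠ ∞ := by
  constructor <;> rintro rfl <;> simp at h

namespace MeasureTheory.Measure

variable {E : Type*} [MeasurableSpace E] {μ ν : Measure E} {S : Set E}

theorem restrict_eq_smul_restrict_of_forall_eq_div (hS : MeasurableSet S)
    (h : ∀ A, MeasurableSet A → A ⊆ S → ν A = μ A / μ S) (h0 : μ S ≠ 0) (htop : μ S ≠ ∞) :
    μ.restrict S = μ S • ν.restrict S := by
  ext A hA
  rw [restrict_apply hA, smul_apply, restrict_apply hA, smul_eq_mul,
    h (A ∩ S) (hA.inter hS) Set.inter_subset_right, ENNReal.mul_div_cancel h0 htop]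

theorem setLIntegral_div_setLIntegral_of_restrict_eq_smul {c : ℝ≥0∞} (h0 : c ≠ 0)
    (htop : c ≠ ∞) (hμν : μ.restrict S = c • ν.restrict S) (g h : E → ℝ≥0∞) :
    (∫⁻ x in S, g x ∂μ) / (∫⁻ x in S, h x ∂μ) =
      (∫⁻ x in S, g x ∂ν) / (∫⁻ x in S, h x ∂ν) := by
  rw [hμν, lintegral_smul_measure, lintegral_smul_measure, smul_eq_mul, smul_eq_mul,
    ENNReal.mul_div_mul_left _ _ h0 htop]

end MeasureTheory.Measure

/-- Since `{τ = n}` means `X_0, …, X_{n-1} ∈ S` and `X_n ∉ S`, the left-hand side is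
`E^ν[f(X_τ) 1_{τ=n}] / P^ν(τ = n)`, both expressed through the killed law
`(survivalStep κ S)^[n-1] ν`. -/
theorem qsd_exit_time_position_indep_general {E : Type*} [MeasurableSpace E]
    (κ : ProbabilityTheory.Kernel E E)
    (S : Set E) (hS : MeasurableSet S)
    (ν : Measure E) (hνS : ν S = 1)
    (hQSD : ∀ n : ℕ, ∀ A : Set E, MeasurableSet A → A ⊆ S →
      ν A = (survivalStep κ S)^[n] ν A / (survivalStep κ S)^[n] ν S)
    (f : E → ℝ≥0∞) :
    ∀ n : ℕ, 1 ≤ n →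
      (∫⁻ x in S, (∫⁻ y in Sᶜ, f y ∂(κ x)) ∂((survivalStep κ S)^[n - 1] ν)) /
        (∫⁻ x in S, κ x Sᶜ ∂((survivalStep κ S)^[n - 1] ν)) =
      (∫⁻ x in S, (∫⁻ y in Sᶜ, f y ∂(κ x)) ∂ν) /
        (∫⁻ x in S, κ x Sᶜ ∂ν) := by
  intro n _
  obtain ⟨h0, htop⟩ := ENNReal.ne_zero_and_ne_top_of_div_self_eq_one
    ((hQSD (n - 1) S hS subset_rfl).symm.trans hνS)
  exact Measure.setLIntegral_div_setLIntegral_of_restrict_eq_smul h0 htop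
    (Measure.restrict_eq_smul_restrict_of_forall_eq_div hS (hQSD (n - 1)) h0 htop) _ _

/-- starting from a quasistationary distribution `ν` of `S`, the
exit time `τ` and the exit position `X_τ` are independent:
`E^ν[f(X_τ) | τ = n] = E^ν[f(X_τ) | τ = 1]` for every `n ≥ 1` and every
(nonnegative) measurable `f`.  Since `{τ = n}` means `X_0, …, X_{n-1} ∈ S`
and `X_n ∉ S`, we have `E^ν[f(X_τ) 1_{τ=n}] = ∫_S ∫_{Sᶜ} f(y) κ(x,dy)
((survivalStep κ S)^[n-1] ν)(dx)` and `P^ν(τ = n) = ∫_S κ(x,Sᶜ)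
((survivalStep κ S)^[n-1] ν)(dx)`. -/
theorem qsd_exit_time_position_indep {E : Type*} [MeasurableSpace E]
    (κ : ProbabilityTheory.Kernel E E) [IsMarkovKernel κ]
    (S : Set E) (hS : MeasurableSet S)
    (ν : Measure E) [IsProbabilityMeasure ν] (hνS : ν S = 1)
    (hQSD : ∀ n : ℕ, ∀ A : Set E, MeasurableSet A → A ⊆ S →
      ν A = (survivalStep κ S)^[n] ν A / (survivalStep κ S)^[n] ν S)
    (f : E → ℝ≥0∞) (hf : Measurable f) :
    ∀ n : ℕ, 1 ≤ n →
      (∫⁻ x in S, (∫⁻ y in Sᶜ, f y ∂(κ x)) ∂((survivalStep κ S)^[n - 1] ν)) /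
        (∫⁻ x in S, κ x Sᶜ ∂((survivalStep κ S)^[n - 1] ν)) =
      (∫⁻ x in S, (∫⁻ y in Sᶜ, f y ∂(κ x)) ∂ν) /
        (∫⁻ x in S, κ x Sᶜ ∂ν) :=
  qsd_exit_time_position_indep_general κ S hS ν hνS hQSD f
end

section
/- Let (X_n) be a Markov chain on Ω, S measurable, τ the first exit time from S, and ν a measure supported in S such that for every measurable A ⊂ S and every initial distribution μ supported in S, ν(A) = lim_{n→∞} P^μ(X_n ∈ A | τ > n). Then ν is a quasistationary distribution, i.e. ν(A) = P^ν(X_n ∈ A | τ > n) for all n and all measurable A ⊂ S, and it is the unique such distribution. -/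
/-!
Write `μₙ = P^ν(Xₙ ∈ · | τ > n)`. The hypothesis for the initial law `ν` says `μₙ → ν` setwise,
hence `∫ f dμₙ → ∫ f dν` for bounded measurable `f`. Applied to `κ(·, A)` and `κ(·, S)`, this
shows that `P^ν(X_{n+1} ∈ A | τ > n + 1)` tends both to `ν A` and to `P^ν(X₁ ∈ A | τ > 1)`.
So one step of the killed dynamics maps `ν` to `c • ν` on `S`, where `c = P^ν(τ > 1)`, hence
`n` steps map it to `cⁿ • ν`, which is quasistationarity. A quasistationary `ν'` has constant
conditioned laws, whose limit is `ν` by hypothesis.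
-/

open MeasureTheory ProbabilityTheory

open Filter Topology
open scoped ENNReal NNReal

/-- By the layer cake formula the integrals are integrals in `t` of the measures of the
superlevel sets `{t ≤ f}`, to which dominated convergence applies. -/
theorem tendsto_lintegral_of_tendsto_measure {E ι : Type*} [MeasurableSpace E] {l : Filter ι}
    [l.IsCountablyGenerated] {μ : ι → Measure E} {ν : Measure E} {C : ℝ≥0∞} (hC : C ≠ ∞)
    (hμC : ∀ i, μ i Set.univ ≤ C)
    (hμν : ∀ A, MeasurableSet A → Tendsto (fun i => μ i A) l (𝓝 (ν A)))
    {f : E → ℝ≥0∞} (hf : Measurable f) {M : ℝ≥0} (hfM : ∀ x, f x ≤ M) :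
    Tendsto (fun i => ∫⁻ x, f x ∂μ i) l (𝓝 (∫⁻ x, f x ∂ν)) := by
  set g : E → ℝ := fun x => (f x).toReal
  have hg : Measurable g := hf.ennreal_toReal
  have layercake : ∀ m : Measure E, ∫⁻ x, f x ∂m = ∫⁻ t in Set.Ioi 0, m {x | t ≤ g x} := by
    intro m
    rw [← lintegral_eq_lintegral_meas_le m (.of_forall fun x => ENNReal.toReal_nonneg)
      hg.aemeasurable]
    exact lintegral_congr fun x =>
      (ENNReal.ofReal_toReal (ne_top_of_le_ne_top ENNReal.coe_ne_top (hfM x))).symm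
  simp only [layercake]
  refine tendsto_lintegral_filter_of_dominated_convergence
    ((Set.Iic (M : ℝ)).indicator fun _ => C) (.of_forall fun i => ?_)
    (.of_forall fun i => .of_forall fun t => ?_) ?_
    (.of_forall fun t => hμν _ (hg measurableSet_Ici))
  · exact Antitone.measurable fun s t hst => measure_mono fun x hx => hst.trans hx
  · by_cases ht : t ≤ M
    · rw [Set.indicator_of_mem (Set.mem_Iic.2 ht)]
      exact (measure_mono (Set.subset_univ _)).trans (hμC i)
    · have hempty : {x | t ≤ g x} = ∅ := Set.eq_empty_of_forall_notMem fun x hx =>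
        ht (hx.trans (ENNReal.toReal_le_coe_of_le_coe (hfM x)))
      rw [hempty, measure_empty]
      exact zero_le
  · rw [lintegral_indicator_const measurableSet_Iic, Measure.restrict_apply measurableSet_Iic,
      Set.Iic_inter_Ioi, Real.volume_Ioc]
    exact ENNReal.mul_ne_top hC ENNReal.ofReal_ne_top

theorem restrict_eq_self_of_measure_eq_one {E : Type*} [MeasurableSpace E] {μ : Measure E}
    [IsProbabilityMeasure μ] {S : Set E} (hS : MeasurableSet S) (hμS : μ S = 1) :
    μ.restrict S = μ :=
  Measure.restrict_eq_self_of_ae_mem (mem_ae_iff.2 ((prob_compl_eq_zero_iff hS).2 hμS))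

section survivalStep

variable {E : Type*} [MeasurableSpace E] (κ : Kernel E E) {S : Set E}

theorem survivalStep_apply (μ : Measure E) {A : Set E} (hA : MeasurableSet A) :
    survivalStep κ S μ A = ∫⁻ x, κ x A ∂μ.restrict S :=
  Measure.bind_apply hA κ.measurable.aemeasurable

theorem survivalStep_restrict (hS : MeasurableSet S) (μ : Measure E) :
    survivalStep κ S (μ.restrict S) = survivalStep κ S μ := by
  rw [survivalStep, survivalStep, Measure.restrict_restrict hS, Set.inter_self]

theorem survivalStep_smul (c : ℝ≥0∞) (μ : Measure E) :
    survivalStep κ S (c • μ) = c • survivalStep κ S μ := by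
  rw [survivalStep, survivalStep, Measure.restrict_smul, Measure.bind_smul]

theorem survivalStep_apply_univ [IsMarkovKernel κ] (μ : Measure E) :
    survivalStep κ S μ Set.univ = μ S := by
  simp [survivalStep_apply κ μ MeasurableSet.univ]

theorem antitone_iterate_survivalStep_apply [IsMarkovKernel κ] (μ : Measure E) :
    Antitone fun n => (survivalStep κ S)^[n] μ S :=
  antitone_nat_of_succ_le fun n => by
    rw [Function.iterate_succ_apply']
    exact (measure_mono (Set.subset_univ S)).trans_eq (survivalStep_apply_univ κ _)

theorem iterate_survivalStep_apply_ne_top [IsMarkovKernel κ] (μ : Measure E) [IsFiniteMeasure μ]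
    (n : ℕ) : (survivalStep κ S)^[n] μ S ≠ ∞ :=
  ne_top_of_le_ne_top (measure_ne_top μ S) (antitone_iterate_survivalStep_apply κ μ n.zero_le)

/-- Since `0 / 0 = 0`, the conditioned mass of `S` cannot tend to a nonzero limit if the survival
probability vanishes at some time, and hence at all later times. -/
theorem iterate_survivalStep_apply_ne_zero_of_tendsto [IsMarkovKernel κ] {μ : Measure E}
    {a : ℝ≥0∞} (ha : a ≠ 0)
    (h : Tendsto (fun n => (survivalStep κ S)^[n] μ S / (survivalStep κ S)^[n] μ S) atTop (𝓝 a))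
    (n : ℕ) : (survivalStep κ S)^[n] μ S ≠ 0 := by
  obtain ⟨m, hm, hnm⟩ := ((h.eventually_ne ha).and (eventually_ge_atTop n)).exists
  intro h0
  have hm0 : (survivalStep κ S)^[m] μ S ≤ (survivalStep κ S)^[n] μ S :=
    antitone_iterate_survivalStep_apply κ μ hnm
  rw [h0, nonpos_iff_eq_zero] at hm0
  rw [hm0, ENNReal.zero_div] at hm
  exact hm rfl

theorem restrict_iterate_survivalStep_eq_pow_smul (hS : MeasurableSet S) {ν : Measure E}
    (hν : ν.restrict S = ν) {c : ℝ≥0∞} (hc : (survivalStep κ S ν).restrict S = c • ν) (n : ℕ) :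
    ((survivalStep κ S)^[n] ν).restrict S = c ^ n • ν := by
  induction n with
  | zero => simpa using hν
  | succ n ih =>
    rw [Function.iterate_succ_apply', ← survivalStep_restrict κ hS, ih, survivalStep_smul,
      Measure.restrict_smul, hc, smul_smul, pow_succ]

/-- The law `P^μ(X_n ∈ · | τ > n)` of the chain at time `n` conditioned on survival. -/
noncomputable def conditionedLaw (S : Set E) (n : ℕ) (μ : Measure E) : Measure E :=
  ((survivalStep κ S)^[n] μ S)⁻¹ • ((survivalStep κ S)^[n] μ).restrict S

theorem conditionedLaw_apply (n : ℕ) (μ : Measure E) {A : Set E} (hA : MeasurableSet A) :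
    conditionedLaw κ S n μ A = (survivalStep κ S)^[n] μ (A ∩ S) / (survivalStep κ S)^[n] μ S := by
  rw [conditionedLaw, Measure.smul_apply, smul_eq_mul, Measure.restrict_apply hA,
    ENNReal.div_eq_inv_mul]

theorem conditionedLaw_apply_univ_le_one (n : ℕ) (μ : Measure E) :
    conditionedLaw κ S n μ Set.univ ≤ 1 := by
  rw [conditionedLaw_apply κ n μ .univ, Set.univ_inter]
  exact ENNReal.div_self_le_one

theorem iterate_succ_survivalStep_apply {n : ℕ} {μ : Measure E}
    (h0 : (survivalStep κ S)^[n] μ S ≠ 0) (htop : (survivalStep κ S)^[n] μ S ≠ ∞)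
    {A : Set E} (hA : MeasurableSet A) :
    (survivalStep κ S)^[n + 1] μ A =
      (survivalStep κ S)^[n] μ S * ∫⁻ x, κ x A ∂conditionedLaw κ S n μ := by
  rw [Function.iterate_succ_apply', survivalStep_apply κ _ hA, conditionedLaw,
    lintegral_smul_measure, smul_eq_mul, ← mul_assoc, ENNReal.mul_inv_cancel h0 htop, one_mul]

end survivalStep

section limitLaw

variable {E : Type*} [MeasurableSpace E] (κ : Kernel E E) {S : Set E}
  (hS : MeasurableSet S) {ν : Measure E} [IsProbabilityMeasure ν] (hνS : ν S = 1)
  (hlim : ∀ A, MeasurableSet A → A ⊆ S → Tendsto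
    (fun n => (survivalStep κ S)^[n] ν A / (survivalStep κ S)^[n] ν S) atTop (𝓝 (ν A)))
include hS hνS hlim

theorem tendsto_conditionedLaw_apply {A : Set E} (hA : MeasurableSet A) :
    Tendsto (fun n => conditionedLaw κ S n ν A) atTop (𝓝 (ν A)) := by
  simp only [conditionedLaw_apply κ _ ν hA]
  rw [← measure_inter_conull ((prob_compl_eq_zero_iff hS).2 hνS)]
  exact hlim _ (hA.inter hS) Set.inter_subset_right

variable [IsMarkovKernel κ]

theorem tendsto_lintegral_conditionedLaw {B : Set E} (hB : MeasurableSet B) :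
    Tendsto (fun n => ∫⁻ x, κ x B ∂conditionedLaw κ S n ν) atTop (𝓝 (survivalStep κ S ν B)) := by
  rw [survivalStep_apply κ ν hB, restrict_eq_self_of_measure_eq_one hS hνS]
  exact tendsto_lintegral_of_tendsto_measure ENNReal.one_ne_top
    (conditionedLaw_apply_univ_le_one κ · ν)
    (fun _ => tendsto_conditionedLaw_apply κ hS hνS hlim)
    (κ.measurable_coe hB) (M := 1) fun x => by simpa using prob_le_one

theorem survivalStep_apply_eq_mul {A : Set E} (hA : MeasurableSet A) (hAS : A ⊆ S) :
    survivalStep κ S ν A = survivalStep κ S ν S * ν A := by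
  have hne_zero := iterate_survivalStep_apply_ne_zero_of_tendsto κ (hνS ▸ one_ne_zero)
    (hlim S hS subset_rfl)
  have hne_top := iterate_survivalStep_apply_ne_top κ (S := S) ν
  have hc0 : survivalStep κ S ν S ≠ 0 := hne_zero 1
  have hctop : survivalStep κ S ν S ≠ ∞ := hne_top 1
  have hratio : Tendsto
      (fun n => (survivalStep κ S)^[n + 1] ν A / (survivalStep κ S)^[n + 1] ν S)
      atTop (𝓝 (survivalStep κ S ν A / survivalStep κ S ν S)) := by
    refine (ENNReal.Tendsto.div (tendsto_lintegral_conditionedLaw κ hS hνS hlim hA)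
      (.inr hc0) (tendsto_lintegral_conditionedLaw κ hS hνS hlim hS) (.inl hctop)).congr fun n => ?_
    rw [iterate_succ_survivalStep_apply κ (hne_zero n) (hne_top n) hA,
      iterate_succ_survivalStep_apply κ (hne_zero n) (hne_top n) hS,
      ENNReal.mul_div_mul_left _ _ (hne_zero n) (hne_top n)]
  rw [tendsto_nhds_unique ((hlim A hA hAS).comp (tendsto_add_atTop_nat 1)) hratio,
    ENNReal.mul_div_cancel hc0 hctop]

theorem restrict_survivalStep_eq_smul :
    (survivalStep κ S ν).restrict S = survivalStep κ S ν S • ν := by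
  ext B hB
  rw [Measure.restrict_apply hB, Measure.smul_apply, smul_eq_mul,
    survivalStep_apply_eq_mul κ hS hνS hlim (hB.inter hS) Set.inter_subset_right,
    measure_inter_conull ((prob_compl_eq_zero_iff hS).2 hνS)]

theorem eq_iterate_survivalStep_div (n : ℕ) {A : Set E} (hAS : A ⊆ S) :
    ν A = (survivalStep κ S)^[n] ν A / (survivalStep κ S)^[n] ν S := by
  have hpow := restrict_iterate_survivalStep_eq_pow_smul κ hS
    (restrict_eq_self_of_measure_eq_one hS hνS) (restrict_survivalStep_eq_smul κ hS hνS hlim) n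
  have hc0 : survivalStep κ S ν S ≠ 0 := iterate_survivalStep_apply_ne_zero_of_tendsto κ
    (hνS ▸ one_ne_zero) (hlim S hS subset_rfl) 1
  have hctop : survivalStep κ S ν S ≠ ∞ := iterate_survivalStep_apply_ne_top κ ν 1
  rw [← Measure.restrict_eq_self ((survivalStep κ S)^[n] ν) hAS,
    ← Measure.restrict_eq_self ((survivalStep κ S)^[n] ν) subset_rfl, hpow,
    Measure.smul_apply, Measure.smul_apply, smul_eq_mul, smul_eq_mul, hνS, mul_one, mul_comm,
    ENNReal.mul_div_cancel_right (pow_ne_zero n hc0) (ENNReal.pow_ne_top hctop)]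

end limitLaw

theorem limit_conditioned_is_unique_qsd_general {E : Type*} [MeasurableSpace E]
    (κ : ProbabilityTheory.Kernel E E) [IsMarkovKernel κ]
    (S : Set E) (hS : MeasurableSet S)
    (ν : Measure E) [IsProbabilityMeasure ν] (hνS : ν S = 1)
    (hlim : ∀ (μ : Measure E), IsProbabilityMeasure μ → μ S = 1 →
      ∀ A : Set E, MeasurableSet A → A ⊆ S →
        Filter.Tendsto
          (fun n : ℕ => (survivalStep κ S)^[n] μ A / (survivalStep κ S)^[n] μ S)
          Filter.atTop (nhds (ν A))) :
    (∀ n : ℕ, ∀ A : Set E, MeasurableSet A → A ⊆ S →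
        ν A = (survivalStep κ S)^[n] ν A / (survivalStep κ S)^[n] ν S) ∧
      (∀ ν' : Measure E, IsProbabilityMeasure ν' → ν' S = 1 →
        (∀ n : ℕ, ∀ A : Set E, MeasurableSet A → A ⊆ S →
          ν' A = (survivalStep κ S)^[n] ν' A / (survivalStep κ S)^[n] ν' S) →
        ν' = ν) := by
  refine ⟨fun n A hA hAS =>
    eq_iterate_survivalStep_div κ hS hνS (hlim ν inferInstance hνS) n hAS, ?_⟩
  intro ν' hν' hν'S hqsd
  rw [← restrict_eq_self_of_measure_eq_one hS hν'S, ← restrict_eq_self_of_measure_eq_one hS hνS]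
  refine (Measure.restrict_congr_meas hS).2 fun A hAS hA =>
    tendsto_nhds_unique ?_ (hlim ν' hν' hν'S A hA hAS)
  exact tendsto_const_nhds.congr fun n => hqsd n A hA hAS

/-- if `ν` (a probability measure supported in `S`) satisfies
`ν(A) = lim_n P^μ(X_n ∈ A | τ > n)` for every initial distribution `μ`
supported in `S` and every measurable `A ⊆ S`, then `ν` is a quasistationary
distribution, and it is the unique one. -/
theorem limit_conditioned_is_unique_qsd {E : Type*} [MeasurableSpace E]
    (κ : ProbabilityTheory.Kernel E E) [IsMarkovKernel κ]
    (S : Set E) (hS : MeasurableSet S)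
    (hpos : ∀ (μ : Measure E), IsProbabilityMeasure μ → μ S = 1 →
      ∀ n : ℕ, (survivalStep κ S)^[n] μ S ≠ 0)
    (ν : Measure E) [IsProbabilityMeasure ν] (hνS : ν S = 1)
    (hlim : ∀ (μ : Measure E), IsProbabilityMeasure μ → μ S = 1 →
      ∀ A : Set E, MeasurableSet A → A ⊆ S →
        Filter.Tendsto
          (fun n : ℕ => (survivalStep κ S)^[n] μ A / (survivalStep κ S)^[n] μ S)
          Filter.atTop (nhds (ν A))) :
    (∀ n : ℕ, ∀ A : Set E, MeasurableSet A → A ⊆ S →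
        ν A = (survivalStep κ S)^[n] ν A / (survivalStep κ S)^[n] ν S) ∧
      (∀ ν' : Measure E, IsProbabilityMeasure ν' → ν' S = 1 →
        (∀ n : ℕ, ∀ A : Set E, MeasurableSet A → A ⊆ S →
          ν' A = (survivalStep κ S)^[n] ν' A / (survivalStep κ S)^[n] ν' S) →
        ν' = ν) :=
  limit_conditioned_is_unique_qsd_general κ S hS ν hνS hlim
end

section
/- Let τ¹, …, τᴺ be i.i.d. geometric(p) random variables on {1,2,…}, m = min(τ¹,…,τᴺ), K = min{j : τʲ = m}, Δt > 0, and define T_corrected = (N(m−1) + K)Δt and T_continuous = N m Δt. Then E[|T_corrected − T_continuous|] = Δt · Σ_{k=1}^{N} (N−k) (1−p)^{k−1} p / (1 − (1−p)^N), and hence the absolute error equals Δt·(N/(1−(1−p)^N) − 1/p). -/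
/-!
Once `m ≥ 1` (which holds almost surely), `|T_corrected - T_continuous| = (N - 1 - K) Δt`, so
only the law of the first minimiser `K` matters. The event `{K = k, m = s + 1}` says that
`τ j > s + 1` for `j < k`, `τ k = s + 1` and `τ j ≥ s + 1` for `j > k`; by independence it has
probability `p (1 - p) ^ (s N + k)`, and summing the geometric series over `s` gives
`P(K = k) = (1 - p) ^ k p / (1 - (1 - p) ^ N)`. The closed form then comes from
`∑_{k < N} (N - 1 - k) (1 - p) ^ k p = N - (1 - (1 - p) ^ N) / p`.
-/

open MeasureTheory ProbabilityTheory

lemma sum_range_sub_mul_geom_pmf {p : ℝ} (hp : p ≠ 0) (N : ℕ) :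
    ∑ k ∈ Finset.range N, ((N : ℝ) - 1 - k) * ((1 - p) ^ k * p)
      = N - (1 - (1 - p) ^ N) / p := by
  induction N with
  | zero => simp
  | succ n ih =>
    have hgeom := geom_sum_mul_neg (1 - p) n
    rw [sub_sub_cancel] at hgeom
    have hshift : ∑ k ∈ Finset.range n, (((n + 1 : ℕ) : ℝ) - 1 - k) * ((1 - p) ^ k * p)
        = ∑ k ∈ Finset.range n, ((n : ℝ) - 1 - k) * ((1 - p) ^ k * p)
          + (∑ k ∈ Finset.range n, (1 - p) ^ k) * p := by
      rw [Finset.sum_mul, ← Finset.sum_add_distrib]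
      exact Finset.sum_congr rfl fun k _ => by push_cast; ring
    rw [Finset.sum_range_succ, hshift, ih, hgeom]
    field_simp
    push_cast
    ring

lemma prod_range_ite_lt_ite_eq (q p : ℝ) {N k : ℕ} (hk : k < N) (s : ℕ) :
    ∏ j ∈ Finset.range N, (if j < k then q ^ (s + 1) else if j = k then q ^ s * p else q ^ s)
      = p * q ^ (s * N + k) := by
  have hfactor : ∀ j, (if j < k then q ^ (s + 1) else if j = k then q ^ s * p else q ^ s)
      = q ^ s * ((if j < k then q else 1) * (if j = k then p else 1)) := by
    intro j
    split_ifs <;> first | omega | ring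
  have hlt : (Finset.range N).filter (· < k) = Finset.range k := by
    ext j; simp only [Finset.mem_filter, Finset.mem_range]; omega
  rw [Finset.prod_congr rfl fun j _ => hfactor j, Finset.prod_mul_distrib, Finset.prod_mul_distrib,
    Finset.prod_const, Finset.card_range, Finset.prod_ite_eq', if_pos (Finset.mem_range.mpr hk),
    Finset.prod_ite, Finset.prod_const, Finset.prod_const_one, hlt, Finset.card_range]
  ring

noncomputable def minOver (N : ℕ) (f : ℕ → ℕ) : ℕ :=
  sInf {t | ∃ j < N, f j = t}

noncomputable def firstArgminOver (N : ℕ) (f : ℕ → ℕ) : ℕ :=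
  sInf {j | j < N ∧ f j = minOver N f}

def firstMinPattern (k t j : ℕ) : Set ℕ :=
  if j < k then Set.Ioi t else if j = k then {t} else Set.Ici t

section FirstMinimizer

variable {N j k t : ℕ} {f : ℕ → ℕ}

lemma exists_eq_minOver (hN : 0 < N) : ∃ j < N, f j = minOver N f :=
  Nat.sInf_mem (⟨f 0, 0, hN, rfl⟩ : {t | ∃ j < N, f j = t}.Nonempty)

lemma minOver_le (hj : j < N) : minOver N f ≤ f j :=
  Nat.sInf_le ⟨j, hj, rfl⟩

lemma firstArgminOver_spec (hN : 0 < N) :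
    firstArgminOver N f < N ∧ f (firstArgminOver N f) = minOver N f :=
  Nat.sInf_mem (exists_eq_minOver hN)

lemma firstArgminOver_le (hj : j < N) (h : f j = minOver N f) : firstArgminOver N f ≤ j :=
  Nat.sInf_le ⟨hj, h⟩

lemma firstArgminOver_eq_and_minOver_eq_iff (hk : k < N) :
    firstArgminOver N f = k ∧ minOver N f = t ↔ ∀ j < N, f j ∈ firstMinPattern k t j := by
  constructor
  · rintro ⟨rfl, rfl⟩ j hj
    unfold firstMinPattern
    split_ifs with hlt heq
    · exact (minOver_le hj).lt_of_ne fun h => (firstArgminOver_le hj h.symm).not_gt hlt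
    · exact heq ▸ (firstArgminOver_spec (Nat.zero_lt_of_lt hk)).2
    · exact minOver_le hj
  · intro h
    have hfk : f k = t := by simpa [firstMinPattern] using h k hk
    have hle : ∀ j < N, t ≤ f j := by
      intro j hj
      have hj' := h j hj
      unfold firstMinPattern at hj'
      split_ifs at hj'
      · exact (Set.mem_Ioi.mp hj').le
      · exact (Set.mem_singleton_iff.mp hj').ge
      · exact Set.mem_Ici.mp hj'
    have hmin : minOver N f = t := by
      obtain ⟨j, hj, hjmin⟩ := exists_eq_minOver (f := f) (Nat.zero_lt_of_lt hk)
      exact le_antisymm (hfk ▸ minOver_le hk) (hjmin ▸ hle j hj)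
    refine ⟨le_antisymm (firstArgminOver_le hk (hfk.trans hmin.symm)) ?_, hmin⟩
    by_contra! hlt
    obtain ⟨hK, hfK⟩ := firstArgminOver_spec (f := f) (Nat.zero_lt_of_lt hk)
    have := h _ hK
    simp only [firstMinPattern, if_pos hlt, Set.mem_Ioi, hfK, hmin] at this
    exact this.false

end FirstMinimizer

section Geometric

variable {Ω : Type*} [MeasurableSpace Ω] {μ : Measure Ω} {X : Ω → ℕ} {p : ℝ}

lemma ae_pos_of_geometric [IsProbabilityMeasure μ] (hX : Measurable X)
    (h : ∀ t : ℕ, μ {ω | t < X ω} = ENNReal.ofReal ((1 - p) ^ t)) :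
    ∀ᵐ ω ∂μ, 0 < X ω := by
  rw [ae_iff_measure_eq (measurableSet_lt measurable_const hX).nullMeasurableSet, h 0, measure_univ]
  simp

lemma measure_eq_succ_of_geometric (hX : Measurable X)
    (h : ∀ t : ℕ, μ {ω | t < X ω} = ENNReal.ofReal ((1 - p) ^ t)) (hp : p ≤ 1) (s : ℕ) :
    μ {ω | X ω = s + 1} = ENNReal.ofReal ((1 - p) ^ s * p) := by
  have hsplit : {ω | s < X ω} = {ω | X ω = s + 1} ∪ {ω | s + 1 < X ω} := by
    ext ω
    show s < X ω ↔ X ω = s + 1 ∨ s + 1 < X ω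
    omega
  have hdisj : Disjoint {ω | X ω = s + 1} {ω | s + 1 < X ω} :=
    Set.disjoint_left.mpr fun ω h1 h2 => by simp_all
  have hadd := h s
  rw [hsplit, measure_union hdisj (hX measurableSet_Ioi), h (s + 1)] at hadd
  rw [ENNReal.eq_sub_of_add_eq ENNReal.ofReal_ne_top hadd,
    ← ENNReal.ofReal_sub _ (pow_nonneg (sub_nonneg.mpr hp) _)]
  ring_nf

lemma measure_preimage_firstMinPattern (hX : Measurable X)
    (h : ∀ t : ℕ, μ {ω | t < X ω} = ENNReal.ofReal ((1 - p) ^ t)) (hp : p ≤ 1)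
    (k s j : ℕ) :
    μ (X ⁻¹' firstMinPattern k (s + 1) j) = ENNReal.ofReal
      (if j < k then (1 - p) ^ (s + 1) else if j = k then (1 - p) ^ s * p else (1 - p) ^ s) := by
  unfold firstMinPattern
  split_ifs
  · exact h (s + 1)
  · exact measure_eq_succ_of_geometric hX h hp s
  · exact h s

end Geometric

section Replicas

variable {Ω : Type*} {N k : ℕ} {τ : ℕ → Ω → ℕ}

lemma setOf_firstArgminOver_eq_and_minOver_eq (hk : k < N) (t : ℕ) :
    {ω | firstArgminOver N (τ · ω) = k ∧ minOver N (τ · ω) = t}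
      = ⋂ j ∈ (Finset.univ : Finset (Fin N)), τ j ⁻¹' firstMinPattern k t j := by
  ext ω
  simp [firstArgminOver_eq_and_minOver_eq_iff hk, Fin.forall_iff]

lemma measure_firstArgminOver_eq_and_minOver_eq_succ [MeasurableSpace Ω] {μ : Measure Ω}
    {p : ℝ} (hmeas : ∀ j, Measurable (τ j))
    (hindep : iIndepFun (fun j : Fin N => τ j) μ)
    (hgeom : ∀ j < N, ∀ t : ℕ, μ {ω | t < τ j ω} = ENNReal.ofReal ((1 - p) ^ t))
    (hp0 : 0 ≤ p) (hp1 : p ≤ 1) (hk : k < N) (s : ℕ) :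
    μ {ω | firstArgminOver N (τ · ω) = k ∧ minOver N (τ · ω) = s + 1}
      = ENNReal.ofReal (p * (1 - p) ^ (s * N + k)) := by
  have hq : 0 ≤ 1 - p := sub_nonneg.mpr hp1
  rw [setOf_firstArgminOver_eq_and_minOver_eq hk,
    hindep.measure_inter_preimage_eq_mul _ fun _ _ => MeasurableSet.of_discrete,
    Finset.prod_congr rfl fun (j : Fin N) _ =>
      measure_preimage_firstMinPattern (hmeas j) (hgeom j j.2) hp1 k s j,
    ← ENNReal.ofReal_prod_of_nonneg fun j _ => by split_ifs <;> positivity,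
    Fin.prod_univ_eq_prod_range
      (fun j => if j < k then (1 - p) ^ (s + 1)
        else if j = k then (1 - p) ^ s * p else (1 - p) ^ s),
    prod_range_ite_lt_ite_eq _ _ hk]

lemma setOf_firstArgminOver_eq_eq_iUnion (k : ℕ) :
    {ω | firstArgminOver N (τ · ω) = k}
      = ⋃ t, {ω | firstArgminOver N (τ · ω) = k ∧ minOver N (τ · ω) = t} := by
  ext ω
  simp

lemma measurableSet_firstArgminOver_eq_and_minOver_eq [MeasurableSpace Ω]
    (hmeas : ∀ j, Measurable (τ j)) (hk : k < N) (t : ℕ) :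
    MeasurableSet {ω | firstArgminOver N (τ · ω) = k ∧ minOver N (τ · ω) = t} := by
  rw [setOf_firstArgminOver_eq_and_minOver_eq hk]
  exact .biInter (Finset.univ : Finset (Fin N)).countable_toSet fun j _ => hmeas j .of_discrete

lemma measurableSet_firstArgminOver_eq [MeasurableSpace Ω] (hmeas : ∀ j, Measurable (τ j))
    (hk : k < N) : MeasurableSet {ω | firstArgminOver N (τ · ω) = k} := by
  rw [setOf_firstArgminOver_eq_eq_iUnion]
  exact .iUnion (measurableSet_firstArgminOver_eq_and_minOver_eq hmeas hk)

lemma ae_minOver_pos [MeasurableSpace Ω] {μ : Measure Ω} [IsProbabilityMeasure μ] {p : ℝ}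
    (hN : 0 < N) (hmeas : ∀ j, Measurable (τ j))
    (hgeom : ∀ j < N, ∀ t : ℕ, μ {ω | t < τ j ω} = ENNReal.ofReal ((1 - p) ^ t)) :
    ∀ᵐ ω ∂μ, 0 < minOver N (τ · ω) := by
  have hτpos : ∀ᵐ ω ∂μ, ∀ j : Fin N, 0 < τ j ω :=
    ae_all_iff.mpr fun j => ae_pos_of_geometric (hmeas j) (hgeom j j.2)
  filter_upwards [hτpos] with ω hω
  obtain ⟨j, hj, hjmin⟩ := exists_eq_minOver (f := (τ · ω)) hN
  exact hjmin ▸ hω ⟨j, hj⟩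

lemma measure_firstArgminOver_eq [MeasurableSpace Ω] {μ : Measure Ω} [IsProbabilityMeasure μ]
    {p : ℝ} (hmeas : ∀ j, Measurable (τ j))
    (hindep : iIndepFun (fun j : Fin N => τ j) μ)
    (hgeom : ∀ j < N, ∀ t : ℕ, μ {ω | t < τ j ω} = ENNReal.ofReal ((1 - p) ^ t))
    (hp0 : 0 < p) (hp1 : p ≤ 1) (hk : k < N) :
    μ {ω | firstArgminOver N (τ · ω) = k}
      = ENNReal.ofReal ((1 - p) ^ k * p / (1 - (1 - p) ^ N)) := by
  set E : ℕ → Set Ω :=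
    fun t => {ω | firstArgminOver N (τ · ω) = k ∧ minOver N (τ · ω) = t}
  have hdisj : Pairwise (Function.onFun Disjoint E) := fun t t' hne =>
    Set.disjoint_left.mpr fun ω h h' => hne (h.2.symm.trans h'.2)
  have hE0 : μ (E 0) = 0 := by
    refine measure_mono_null (fun ω hω => ?_)
      (ae_iff.mp (ae_pos_of_geometric (hmeas k) (hgeom k hk)))
    obtain ⟨hK, hmin⟩ := hω
    have := (firstArgminOver_spec (f := (τ · ω)) (Nat.zero_lt_of_lt hk)).2
    rw [hK, hmin] at this
    exact this.not_gt
  have hq : 0 ≤ 1 - p := sub_nonneg.mpr hp1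
  have hqN : (1 - p) ^ N < 1 := pow_lt_one₀ hq (by linarith) (Nat.zero_lt_of_lt hk).ne'
  have hEsucc : ∀ s, μ (E (s + 1)) = ENNReal.ofReal (p * (1 - p) ^ k * ((1 - p) ^ N) ^ s) :=
    fun s => by
      rw [measure_firstArgminOver_eq_and_minOver_eq_succ hmeas hindep hgeom hp0.le hp1 hk s,
        pow_add, mul_comm s, pow_mul]
      ring_nf
  rw [setOf_firstArgminOver_eq_eq_iUnion,
    measure_iUnion hdisj (measurableSet_firstArgminOver_eq_and_minOver_eq hmeas hk),
    tsum_eq_zero_add' ENNReal.summable, hE0, zero_add]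
  simp_rw [hEsucc]
  rw [← ENNReal.ofReal_tsum_of_nonneg (fun s => by positivity)
    ((summable_geometric_of_lt_one (by positivity) hqN).mul_left _), tsum_mul_left,
    tsum_geometric_of_lt_one (by positivity) hqN]
  ring_nf

end Replicas

lemma abs_corrected_sub_continuous_time {N m K : ℕ} (hm : 0 < m) (hK : K < N) {Δt : ℝ}
    (hΔt : 0 ≤ Δt) :
    |((N * (m - 1) + (K + 1) : ℕ) : ℝ) * Δt - ((N * m : ℕ) : ℝ) * Δt|
      = Δt * (N - 1 - K) := by
  have hKN : (K : ℝ) + 1 ≤ N := by exact_mod_cast hK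
  rw [abs_sub_comm]
  push_cast [Nat.cast_sub hm]
  rw [abs_of_nonneg (by nlinarith)]
  ring

lemma integral_comp_eq_sum_range {Ω : Type*} [MeasurableSpace Ω] {μ : Measure Ω}
    [IsFiniteMeasure μ] {N : ℕ} {K : Ω → ℕ} (hK : ∀ ω, K ω < N)
    (hmeasK : ∀ k < N, MeasurableSet {ω | K ω = k}) (g : ℕ → ℝ) :
    ∫ ω, g (K ω) ∂μ = ∑ k ∈ Finset.range N, μ.real {ω | K ω = k} * g k := by
  have hsum : (fun ω => g (K ω))
      = fun ω => ∑ k ∈ Finset.range N, {ω | K ω = k}.indicator (fun _ => g k) ω := by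
    ext ω
    simp only [Set.indicator_apply, Set.mem_ofPred_eq, Finset.sum_ite_eq,
      Finset.mem_range.mpr (hK ω), if_true]
  rw [hsum, integral_finsetSum _ fun k hk =>
    (integrable_const _).indicator (hmeasK k (Finset.mem_range.mp hk))]
  refine Finset.sum_congr rfl fun k hk => ?_
  rw [integral_indicator_const _ (hmeasK k (Finset.mem_range.mp hk)), smul_eq_mul]

/-- Replicas are indexed `0, …, N - 1`, so the paper's one-based `K` is `K + 1` here. -/
theorem parRep_expected_time_error
    {Ω : Type*} [MeasurableSpace Ω] (μ : Measure Ω) [IsProbabilityMeasure μ]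
    (N : ℕ) (hN : 1 ≤ N) (p : ℝ) (hp0 : 0 < p) (hp1 : p < 1) (Δt : ℝ) (hΔt : 0 < Δt)
    (τ : ℕ → Ω → ℕ) (hmeas : ∀ j, Measurable (τ j))
    (hindep : iIndepFun (fun j : Fin N => τ j) μ)
    (hgeom : ∀ j < N, ∀ t : ℕ, μ {ω | t < τ j ω} = ENNReal.ofReal ((1 - p) ^ t))
    (m : Ω → ℕ) (hm : ∀ ω, m ω = sInf {t | ∃ j < N, τ j ω = t})
    (K : Ω → ℕ) (hK : ∀ ω, K ω = sInf {j | j < N ∧ τ j ω = m ω})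
    (Tcorrected Tcontinuous : Ω → ℝ)
    (hTcor : ∀ ω, Tcorrected ω = (N * (m ω - 1) + (K ω + 1) : ℕ) * Δt)
    (hTcon : ∀ ω, Tcontinuous ω = (N * m ω : ℕ) * Δt) :
    (∫ ω, |Tcorrected ω - Tcontinuous ω| ∂μ) =
      Δt * ∑ k ∈ Finset.range N,
        ((N : ℝ) - 1 - k) * ((1 - p) ^ k * p / (1 - (1 - p) ^ N)) ∧
    (∫ ω, |Tcorrected ω - Tcontinuous ω| ∂μ) =
      Δt * ((N : ℝ) / (1 - (1 - p) ^ N) - 1 / p) := by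
  have hKeq : K = fun ω => firstArgminOver N (τ · ω) := funext fun ω => by rw [hK, hm]; rfl
  have hKlt : ∀ ω, K ω < N := fun ω => hKeq ▸ (firstArgminOver_spec hN).1
  have herr : ∀ᵐ ω ∂μ, |Tcorrected ω - Tcontinuous ω| = Δt * ((N : ℝ) - 1 - K ω) := by
    filter_upwards [ae_minOver_pos hN hmeas hgeom] with ω hmpos
    rw [hTcor, hTcon]
    exact abs_corrected_sub_continuous_time (by rwa [hm ω]) (hKlt ω) hΔt.le
  have hD : 0 < 1 - (1 - p) ^ N :=
    sub_pos.mpr (pow_lt_one₀ (by linarith) (by linarith) (by omega))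
  have hint : ∫ ω, |Tcorrected ω - Tcontinuous ω| ∂μ
      = Δt * ∑ k ∈ Finset.range N,
          ((N : ℝ) - 1 - k) * ((1 - p) ^ k * p / (1 - (1 - p) ^ N)) := by
    rw [integral_congr_ae herr,
      integral_comp_eq_sum_range (g := fun k => Δt * ((N : ℝ) - 1 - k)) hKlt
        (hKeq ▸ fun k hk => measurableSet_firstArgminOver_eq hmeas hk), Finset.mul_sum]
    refine Finset.sum_congr rfl fun k hk => ?_
    have hlaw := measure_firstArgminOver_eq hmeas hindep hgeom hp0 hp1.le (Finset.mem_range.mp hk)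
    rw [measureReal_def, hKeq, hlaw, ENNReal.toReal_ofReal (by positivity)]
    ring
  refine ⟨hint, ?_⟩
  simp_rw [hint, ← mul_div_assoc, ← Finset.sum_div, sum_range_sub_mul_geom_pmf hp0.ne']
  field_simp
end

section
/- Let τʲ and Xʲ, j=1,…,N, be independent pairs where each τʲ is geometric(p) on {1,2,…}, each Xʲ takes values in a measurable space with common law η, and τʲ is independent of Xʲ. Let K = min{j : τʲ = min_i τⁱ}. Then X^K (the value X at the random index K) has law η and is independent of the sigma-algebra generated by (K, τᴷ). -/
/-!
`K` and `τᴷ` are functions of the countably-valued vector `Z = (τ⁰, …, τᴺ⁻¹)`, and each `Xʲ` is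
independent of `Z`: the pair `(τʲ, Xʲ)` is independent of the other `τⁱ`, and `τʲ` of `Xʲ`.
On the event `{Z = z}` the random index is the fixed index `k z`, so
`P(Xᴷ ∈ A, Z = z) = P(Xᵏ⁽ᶻ⁾ ∈ A, Z = z) = η(A) P(Z = z)`; summing over `z` gives both the law of
`Xᴷ` and its independence of `Z`, hence of `(K, τᴷ)`.
-/

open MeasureTheory ProbabilityTheory

namespace ProbabilityTheory

section Independence

variable {Ω α β γ : Type*} [MeasurableSpace Ω] [MeasurableSpace α] [MeasurableSpace β]
  [MeasurableSpace γ] {μ : Measure Ω} [IsProbabilityMeasure μ]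

theorem IndepFun.indepFun_prodMk_of_indepFun_prodMk {Y : Ω → α} {X : Ω → β} {W : Ω → γ}
    (hY : Measurable Y) (hX : Measurable X) (hW : Measurable W)
    (hYX_W : IndepFun (fun ω => (Y ω, X ω)) W μ) (hYX : IndepFun Y X μ) :
    IndepFun X (fun ω => (Y ω, W ω)) μ := by
  have hYW : IndepFun Y W μ := hYX_W.comp measurable_fst measurable_id
  rw [indepFun_iff_map_prod_eq_prod_map_map hX.aemeasurable (hY.prodMk hW).aemeasurable,
    indepFun_iff_map_prod_eq_prod_map_map hY.aemeasurable hW.aemeasurable |>.1 hYW]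
  have hrearrange : (fun ω => (X ω, (Y ω, W ω))) =
      MeasurableEquiv.prodAssoc ∘ Prod.map Prod.swap id ∘ fun ω => ((Y ω, X ω), W ω) := rfl
  rw [hrearrange, ← Measure.map_map MeasurableEquiv.prodAssoc.measurable
      ((measurable_swap.prodMap measurable_id).comp ((hY.prodMk hX).prodMk hW)),
    ← Measure.map_map (measurable_swap.prodMap measurable_id) ((hY.prodMk hX).prodMk hW),
    indepFun_iff_map_prod_eq_prod_map_map (hY.prodMk hX).aemeasurable hW.aemeasurable |>.1 hYX_W,
    indepFun_iff_map_prod_eq_prod_map_map hY.aemeasurable hX.aemeasurable |>.1 hYX,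
    ← Measure.map_prod_map _ _ measurable_swap measurable_id, Measure.prod_swap, Measure.map_id,
    Measure.prodAssoc_prod]

theorem iIndepFun.indepFun_snd_pi_fst {ι : Type*} [Fintype ι] [DecidableEq ι]
    {τ : ι → Ω → α} {X : ι → Ω → β} (hτ : ∀ i, Measurable (τ i)) (hX : ∀ i, Measurable (X i))
    (hind : iIndepFun (fun i ω => (τ i ω, X i ω)) μ) {j : ι} (hτX : IndepFun (τ j) (X j) μ) :
    IndepFun (X j) (fun ω i => τ i ω) μ := by
  let others : Ω → ({j}ᶜ : Finset ι) → α := fun ω i => τ i ω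
  have hpair : IndepFun (fun ω => (τ j ω, X j ω)) others μ := by
    have h := hind.indepFun_finset {j} {j}ᶜ (by simp) fun i => (hτ i).prodMk (hX i)
    exact h.comp (measurable_pi_apply ⟨j, Finset.mem_singleton_self j⟩)
      (measurable_pi_lambda (fun (v : ({j}ᶜ : Finset ι) → α × β) i => (v i).1)
        fun i => (measurable_pi_apply i).fst)
  let merge : α × (({j}ᶜ : Finset ι) → α) → ι → α :=
    fun p i => if h : i = j then p.1 else p.2 ⟨i, by simpa using h⟩
  have hmerge : Measurable merge := by
    refine measurable_pi_lambda _ fun i => ?_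
    by_cases h : i = j
    · simpa [merge, h] using measurable_fst
    · simp only [merge, h, ↓reduceDIte]
      exact (measurable_pi_apply _).comp measurable_snd
  have hvec : (fun ω i => τ i ω) = merge ∘ fun ω => (τ j ω, others ω) := by
    funext ω i
    by_cases h : i = j
    · subst h
      simp [merge]
    · simp [merge, others, h]
  rw [hvec]
  exact (hpair.indepFun_prodMk_of_indepFun_prodMk (hτ j) (hX j)
    (measurable_pi_lambda others fun i => hτ i) hτX).comp measurable_id hmerge

end Independence

section RandomIndex

variable {Ω ι β E : Type*} [MeasurableSpace Ω] [MeasurableSpace β] [Countable β]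
  [MeasurableSingletonClass β] [MeasurableSpace E] {μ : Measure Ω} {η : Measure E}
  {X : ι → Ω → E} {Z : Ω → β}

theorem measurable_apply_index (hX : ∀ i, Measurable (X i)) (hZ : Measurable Z) (k : β → ι) :
    Measurable fun ω => X (k (Z ω)) ω :=
  (measurable_from_prod_countable_left (f := fun p : Ω × β => X (k p.2) p.1)
    fun z => hX (k z)).comp (measurable_id.prodMk hZ)

theorem measure_apply_index_inter_preimage (hX : ∀ i, Measurable (X i)) (hZ : Measurable Z)
    (hXZ : ∀ i, IndepFun (X i) Z μ) (hlaw : ∀ i, μ.map (X i) = η)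
    (k : β → ι) {A : Set E} (hA : MeasurableSet A) (S : Set β) :
    μ ((fun ω => X (k (Z ω)) ω) ⁻¹' A ∩ Z ⁻¹' S) = η A * μ (Z ⁻¹' S) := by
  have hfiber : ∀ z, μ ((fun ω => X (k (Z ω)) ω) ⁻¹' A ∩ Z ⁻¹' {z}) = η A * μ (Z ⁻¹' {z}) := by
    intro z
    have hselect : (fun ω => X (k (Z ω)) ω) ⁻¹' A ∩ Z ⁻¹' {z} = X (k z) ⁻¹' A ∩ Z ⁻¹' {z} := by
      ext ω
      simp +contextual [and_congr_left_iff]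
    rw [hselect, (hXZ (k z)).measure_inter_preimage_eq_mul _ _ hA (measurableSet_singleton z),
      ← Measure.map_apply (hX (k z)) hA, hlaw]
  have hZS : ∀ z ∈ S, MeasurableSet (Z ⁻¹' {z}) := fun z _ => hZ (measurableSet_singleton z)
  rw [Set.inter_comm, ← Measure.restrict_apply (hZ S.to_countable.measurableSet),
    ← tsum_measure_preimage_singleton S.to_countable hZS,
    ← tsum_measure_preimage_singleton S.to_countable hZS, ← ENNReal.tsum_mul_left]
  refine tsum_congr fun z => ?_
  rw [Measure.restrict_apply (hZ (measurableSet_singleton _)), Set.inter_comm, hfiber]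

theorem map_apply_index_and_indepFun [IsProbabilityMeasure μ]
    (hX : ∀ i, Measurable (X i)) (hZ : Measurable Z) (hXZ : ∀ i, IndepFun (X i) Z μ)
    (hlaw : ∀ i, μ.map (X i) = η) (k : β → ι) :
    μ.map (fun ω => X (k (Z ω)) ω) = η ∧ IndepFun (fun ω => X (k (Z ω)) ω) Z μ := by
  have hmap : μ.map (fun ω => X (k (Z ω)) ω) = η := by
    ext A hA
    rw [Measure.map_apply (measurable_apply_index hX hZ k) hA]
    simpa using measure_apply_index_inter_preimage hX hZ hXZ hlaw k hA Set.univ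
  refine ⟨hmap, indepFun_iff_measure_inter_preimage_eq_mul.2 fun A S hA _ => ?_⟩
  rw [measure_apply_index_inter_preimage hX hZ hXZ hlaw k hA, ← hmap,
    Measure.map_apply (measurable_apply_index hX hZ k) hA]

end RandomIndex

end ProbabilityTheory

noncomputable def firstArgminBelow (N : ℕ) (f : ℕ → ℕ) : ℕ :=
  sInf {j | j < N ∧ f j = sInf {t | ∃ i < N, f i = t}}

theorem firstArgminBelow_lt {N : ℕ} (hN : 1 ≤ N) (f : ℕ → ℕ) : firstArgminBelow N f < N := by
  obtain ⟨i, hi, hmin⟩ := Nat.sInf_mem (s := {t | ∃ i < N, f i = t}) ⟨f 0, 0, hN, rfl⟩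
  exact (Nat.sInf_mem (s := {j | j < N ∧ f j = sInf {t | ∃ i < N, f i = t}}) ⟨i, hi, hmin⟩).1

theorem firstArgminBelow_congr {N : ℕ} {f g : ℕ → ℕ} (h : ∀ i < N, f i = g i) :
    firstArgminBelow N f = firstArgminBelow N g := by
  have hvalues : {t | ∃ i < N, f i = t} = {t | ∃ i < N, g i = t} :=
    Set.ext fun t => exists_congr fun i => and_congr_right fun hi => by rw [h i hi]
  unfold firstArgminBelow
  rw [hvalues]
  exact congrArg sInf (Set.ext fun j => and_congr_right fun hj => by rw [h j hj])

theorem value_at_argmin_indep_general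
    {Ω E : Type*} [MeasurableSpace Ω] [MeasurableSpace E]
    (μ : Measure Ω) [IsProbabilityMeasure μ]
    (N : ℕ) (hN : 1 ≤ N)
    (η : Measure E)
    (τ : ℕ → Ω → ℕ) (X : ℕ → Ω → E)
    (hτmeas : ∀ j, Measurable (τ j)) (hXmeas : ∀ j, Measurable (X j))
    (hindep : iIndepFun
      (fun j : Fin N => fun ω => (τ j ω, X j ω)) μ)
    (hlaw : ∀ j < N, Measure.map (X j) μ = η)
    (hτX : ∀ j < N, IndepFun (τ j) (X j) μ)
    (K : Ω → ℕ)
    (hK : ∀ ω, K ω = sInf {j | j < N ∧ τ j ω = sInf {t | ∃ i < N, τ i ω = t}}) :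
    Measure.map (fun ω => X (K ω) ω) μ = η ∧
      IndepFun (fun ω => X (K ω) ω) (fun ω => (K ω, τ (K ω) ω)) μ := by
  let Z : Ω → Fin N → ℕ := fun ω i => τ i ω
  let k : (Fin N → ℕ) → Fin N := fun z =>
    ⟨firstArgminBelow N fun j => if h : j < N then z ⟨j, h⟩ else 0, firstArgminBelow_lt hN _⟩
  have hKk : ∀ ω, K ω = k (Z ω) := fun ω =>
    (hK ω).trans (firstArgminBelow_congr fun i hi => by simp [Z, hi])
  have hZ : Measurable Z := measurable_pi_lambda _ fun i => hτmeas i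
  have hXZ : ∀ i : Fin N, IndepFun (X i) Z μ := fun i =>
    hindep.indepFun_snd_pi_fst (τ := fun i : Fin N => τ i) (X := fun i : Fin N => X i)
      (fun i => hτmeas i) (fun i => hXmeas i) (hτX i i.2)
  obtain ⟨hmap, hindepZ⟩ := map_apply_index_and_indepFun (X := fun i : Fin N => X i)
    (fun i => hXmeas i) hZ hXZ (fun i => hlaw i i.2) k
  have hXK : (fun ω => X (K ω) ω) = fun ω => X (k (Z ω)) ω := funext fun ω => by rw [hKk]
  have hKτ : (fun ω => (K ω, τ (K ω) ω)) = (fun z => ((k z : ℕ), z (k z))) ∘ Z :=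
    funext fun ω => by simp [hKk, Z]
  rw [hXK, hKτ]
  exact ⟨hmap, hindepZ.comp measurable_id (measurable_of_countable _)⟩

/-- if `(τʲ, Xʲ)`, `j = 0, …, N-1`, are independent pairs with
each `τʲ` geometric(p) on `{1,2,…}`, each `Xʲ` of law `η`, and `τʲ`
independent of `Xʲ`, and `K` is the smallest index attaining the minimum of
the `τʲ`, then `X^K` has law `η` and is independent of the sigma-algebra
generated by `(K, τᴷ)`. -/
theorem value_at_argmin_indep
    {Ω E : Type*} [MeasurableSpace Ω] [MeasurableSpace E]
    (μ : Measure Ω) [IsProbabilityMeasure μ]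
    (N : ℕ) (hN : 1 ≤ N) (p : ℝ) (hp0 : 0 < p) (hp1 : p < 1)
    (η : Measure E) [IsProbabilityMeasure η]
    (τ : ℕ → Ω → ℕ) (X : ℕ → Ω → E)
    (hτmeas : ∀ j, Measurable (τ j)) (hXmeas : ∀ j, Measurable (X j))
    (hindep : iIndepFun
      (fun j : Fin N => fun ω => (τ j ω, X j ω)) μ)
    (hgeom : ∀ j < N, ∀ t : ℕ, μ {ω | t < τ j ω} = ENNReal.ofReal ((1 - p) ^ t))
    (hlaw : ∀ j < N, Measure.map (X j) μ = η)
    (hτX : ∀ j < N, IndepFun (τ j) (X j) μ)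
    (K : Ω → ℕ)
    (hK : ∀ ω, K ω = sInf {j | j < N ∧ τ j ω = sInf {t | ∃ i < N, τ i ω = t}}) :
    Measure.map (fun ω => X (K ω) ω) μ = η ∧
      IndepFun (fun ω => X (K ω) ω) (fun ω => (K ω, τ (K ω) ω)) μ :=
  value_at_argmin_indep_general μ N hN η τ X hτmeas hXmeas hindep hlaw hτX K hK
end
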